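/- Let B be an integral domain of finite transcendence degree over a field k of characteristic zero, G a totally ordered abelian group, and deg : B → G ∪ {−∞} a degree function such that the set {deg(x) : x ∈ B \ {0}} is a well-ordered subset of G; then deg(x) ≥ 0 for all nonzero x ∈ B and Z = {x ∈ B : deg(x) ≤ 0} is a subring of B on which deg vanishes on nonzero elements. Suppose z₁, …, z_m ∈ Z are such that Z is algebraic over k[z₁, …, z_m], and suppose there exist nonzero x₁, …, x_n ∈ B with the following property (which expresses that the associated graded ring of (B, deg) equals Z[gr(x₁), …, gr(x_n)]): for every nonzero b ∈ B there exists e ∈ B which is a finite Z-linear combination of monomials x₁^{e₁}⋯x_n^{e_n} with e₁·deg(x₁) + ⋯ + e_n·deg(x_n) = deg(b) for each monomial occurring with nonzero coefficient, and deg(b − e) < deg(b). Then B = Z[x₁, …, x_n], deg is tame over k, and for every k-derivation D : B → B, deg(D) is defined and deg(D) = max{δ_D(z₁), …, δ_D(z_m), δ_D(x₁), …, δ_D(x_n)}. -/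

import Mathlib

section DegreePrelude

variable {B : Type*} [CommRing B] {G : Type*} [AddCommGroup G] [LinearOrder G] [IsOrderedAddMonoid G]

/-- A degree function on `B` with values in `G ∪ {-∞}` -/
def IsDegreeFunction (deg : B → WithBot G) : Prop :=
  (∀ x : B, deg x = ⊥ ↔ x = 0) ∧
  (∀ x y : B, deg (x * y) = deg x + deg y) ∧
  (∀ x y : B, deg (x + y) ≤ max (deg x) (deg y))

/-- `degDelta deg D x = deg (D x) - deg x` (with value `-∞` if `D x = 0`). -/
noncomputable def degDelta (deg : B → WithBot G) (D : B → B) (x : B) : WithBot G :=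
  (deg (D x)).map fun a => a - WithBot.unbotD 0 (deg x)

/-- The set `{deg (D x) - deg x : x ∈ B \ {0}}`. -/
def degDeltaSet (deg : B → WithBot G) (D : B → B) : Set (WithBot G) :=
  {m | ∃ x : B, x ≠ 0 ∧ degDelta deg D x = m}

/-- `deg (D)` is defined, i.e. the set `{deg (D x) - deg x : x ≠ 0}` has a
greatest element in `G ∪ {-∞}`. -/
def DegreeDefinedAt (deg : B → WithBot G) (D : B → B) : Prop :=
  ∃ M, IsGreatest (degDeltaSet deg D) M

end DegreePrelude

/-!
If `deg b < 0`, the degrees of `b, b², b³, …` would form an infinite descending chain in a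
well-ordered set; so `deg ≥ 0` on `B \ {0}`, and `deg a < deg b` is a well-founded relation on `B`.
The graded hypothesis lets one induct on it: `b = (b - e) + e` with `deg (b - e) < deg b` and `e` a
sum of monomials `c x^v` of degree `deg b`, `c ∈ Z`. This gives `B = Z[x]`, and it gives
`deg (D b) ≤ M + deg b` with `M = max (δ_D zⱼ, δ_D xᵢ)` as soon as this bound holds on `Z` and on
the `xᵢ`, because the bound is multiplicative. On `Z` it comes from algebraicity over `k[z]`:
differentiating a relation `p(c) = 0` of minimal degree gives `p'(c) D c = -∑ cⁱ D pᵢ`, where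
`p'(c)` is a nonzero element of `Z`, hence of degree `0`. Being one of the `δ_D` values (or `⊥`),
`M` is attained.
-/

open Polynomial in
theorem Polynomial.exists_aeval_eq_zero_aeval_derivative_ne_zero {R S : Type*} [CommRing R]
    [IsAddTorsionFree R] [CommRing S] [Algebra R S] [FaithfulSMul R S] {c : S}
    (hc : IsAlgebraic R c) : ∃ p : R[X], aeval c p = 0 ∧ aeval c (derivative p) ≠ 0 := by
  classical
  obtain ⟨q, hq0, hqc⟩ := hc
  have hex : ∃ N, ∃ p : R[X], p ≠ 0 ∧ aeval c p = 0 ∧ p.natDegree = N := ⟨_, q, hq0, hqc, rfl⟩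
  obtain ⟨p, hp0, hpc, hpN⟩ := Nat.find_spec hex
  have hdeg_ne : p.natDegree ≠ 0 := by
    intro h
    rw [eq_C_of_natDegree_eq_zero h, aeval_C,
      (FaithfulSMul.algebraMap_injective R S).eq_iff' (map_zero _)] at hpc
    exact hp0 (leadingCoeff_eq_zero.1 (by rwa [leadingCoeff, h]))
  refine ⟨p, hpc, fun h => ?_⟩
  have := Nat.find_min' hex ⟨_, derivative_ne_zero.2 hdeg_ne, h, rfl⟩
  have := natDegree_derivative_lt hdeg_ne
  omega

namespace IsDegreeFunction

variable {R B G ι : Type*} [CommRing R] [CommRing B] [Algebra R B] [AddCommGroup G]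
  [LinearOrder G] {deg : B → WithBot G}

theorem deg_eq_bot_iff (hdeg : IsDegreeFunction deg) {x : B} : deg x = ⊥ ↔ x = 0 :=
  hdeg.1 x

theorem deg_mul (hdeg : IsDegreeFunction deg) (x y : B) : deg (x * y) = deg x + deg y :=
  hdeg.2.1 x y

theorem deg_add_le (hdeg : IsDegreeFunction deg) (x y : B) :
    deg (x + y) ≤ max (deg x) (deg y) :=
  hdeg.2.2 x y

theorem deg_zero (hdeg : IsDegreeFunction deg) : deg 0 = ⊥ :=
  hdeg.deg_eq_bot_iff.2 rfl

theorem exists_deg_eq_coe (hdeg : IsDegreeFunction deg) {x : B} (hx : x ≠ 0) :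
    ∃ g : G, deg x = g :=
  WithBot.ne_bot_iff_exists.1 (hdeg.deg_eq_bot_iff.not.2 hx) |>.imp fun _ h => h.symm

theorem deg_one [Nontrivial B] (hdeg : IsDegreeFunction deg) : deg 1 = 0 := by
  obtain ⟨g, hg⟩ := hdeg.exists_deg_eq_coe one_ne_zero
  have h := hdeg.deg_mul 1 1
  rw [mul_one, hg, ← WithBot.coe_add, WithBot.coe_inj] at h
  rw [hg, left_eq_add.1 h, WithBot.coe_zero]

theorem deg_pow [Nontrivial B] (hdeg : IsDegreeFunction deg) (x : B) (n : ℕ) :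
    deg (x ^ n) = n • deg x := by
  induction n with
  | zero => rw [pow_zero, hdeg.deg_one, zero_nsmul]
  | succ n ih => rw [pow_succ, hdeg.deg_mul, ih, succ_nsmul]

theorem deg_prod [Nontrivial B] (hdeg : IsDegreeFunction deg) (s : Finset ι) (f : ι → B) :
    deg (∏ i ∈ s, f i) = ∑ i ∈ s, deg (f i) := by
  induction s using Finset.cons_induction with
  | empty => rw [Finset.prod_empty, Finset.sum_empty, hdeg.deg_one]
  | cons a s ha ih => rw [Finset.prod_cons, Finset.sum_cons, hdeg.deg_mul, ih]

theorem deg_sum_le (hdeg : IsDegreeFunction deg) (s : Finset ι) (f : ι → B) {t : WithBot G}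
    (h : ∀ i ∈ s, deg (f i) ≤ t) : deg (∑ i ∈ s, f i) ≤ t := by
  induction s using Finset.cons_induction with
  | empty => simp [hdeg.deg_zero]
  | cons a s ha ih =>
    rw [Finset.sum_cons]
    exact (hdeg.deg_add_le _ _).trans
      (max_le (h a (Finset.mem_cons_self a s)) (ih fun i hi => h i (Finset.mem_cons_of_mem hi)))

theorem wellFounded_deg_lt (hdeg : IsDegreeFunction deg)
    (hwo : Set.IsWF {g : G | ∃ x : B, x ≠ 0 ∧ deg x = ↑g}) :
    WellFounded fun a b : B => deg a < deg b := by
  have hrange : Set.range deg ⊆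
      insert ⊥ (WithBot.some '' {g : G | ∃ x : B, x ≠ 0 ∧ deg x = ↑g}) := by
    rintro _ ⟨x, rfl⟩
    obtain rfl | hx := eq_or_ne x 0
    · exact Or.inl hdeg.deg_zero
    · obtain ⟨g, hg⟩ := hdeg.exists_deg_eq_coe hx
      exact Or.inr ⟨g, ⟨x, hx, hg⟩, hg.symm⟩
  exact Set.wellFoundedOn_range.1
    (((hwo.isPWO.image_of_monotone WithBot.coe_mono).isWF.insert ⊥).mono hrange)

variable (deg) in
def homogeneousMonomials [Fintype ι] (x : ι → B) (g : WithBot G) : Set B :=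
  {w | ∃ c : B, deg c ≤ 0 ∧ ∃ v : ι → ℕ, w = c * ∏ i, x i ^ v i ∧ ∑ i, v i • deg (x i) = g}

theorem subring_closure_union_range_eq_top [Fintype ι] (hdeg : IsDegreeFunction deg)
    (hwo : Set.IsWF {g : G | ∃ x : B, x ≠ 0 ∧ deg x = ↑g}) (x : ι → B)
    (hgr : ∀ b : B, b ≠ 0 → ∃ e ∈ AddSubmonoid.closure (homogeneousMonomials deg x (deg b)),
      deg (b - e) < deg b) :
    Subring.closure ({b : B | deg b ≤ 0} ∪ Set.range x) = ⊤ := by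
  set S := Subring.closure ({b : B | deg b ≤ 0} ∪ Set.range x)
  have hmonomials (g : WithBot G) : homogeneousMonomials deg x g ⊆ S := by
    rintro _ ⟨c, hc, v, rfl, -⟩
    exact mul_mem (Subring.subset_closure (Set.mem_union_left _ hc)) (prod_mem fun i _ =>
      pow_mem (Subring.subset_closure (Set.mem_union_right _ (Set.mem_range_self i))) _)
  refine (Subring.eq_top_iff' S).2 fun b => ?_
  induction b using (hdeg.wellFounded_deg_lt hwo).induction with
  | _ b ih =>
    obtain rfl | hb := eq_or_ne b 0
    · exact zero_mem S
    obtain ⟨e, he, hlt⟩ := hgr b hb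
    have heS : e ∈ S := (AddSubmonoid.closure_le (S := S.toAddSubmonoid)).2 (hmonomials _) he
    simpa using add_mem (ih _ hlt) heS

theorem degDelta_mem_degDeltaSet [Nontrivial B] (hdeg : IsDegreeFunction deg)
    (D : Derivation R B B) (a : B) : degDelta deg D a ∈ degDeltaSet deg D := by
  obtain rfl | ha := eq_or_ne a 0
  · exact ⟨1, one_ne_zero, by simp [degDelta, hdeg.deg_zero]⟩
  · exact ⟨a, ha, rfl⟩

theorem finsetSup_degDelta_mem_degDeltaSet [Nontrivial B] (hdeg : IsDegreeFunction deg)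
    (D : Derivation R B B) (s : Finset ι) (f : ι → B) :
    s.sup (fun i => degDelta deg D (f i)) ∈ degDeltaSet deg D :=
  Finset.sup_mem _ (by simpa [degDelta, hdeg.deg_zero] using hdeg.degDelta_mem_degDeltaSet D 0)
    (fun _ ha _ hb => LinearOrder.supClosed _ ha hb) _ _
    fun i _ => hdeg.degDelta_mem_degDeltaSet D (f i)

variable [IsOrderedAddMonoid G]

theorem deg_neg [Nontrivial B] (hdeg : IsDegreeFunction deg) (x : B) : deg (-x) = deg x := by
  obtain ⟨g, hg⟩ := hdeg.exists_deg_eq_coe (neg_ne_zero.2 (one_ne_zero (α := B)))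
  have h := hdeg.deg_mul (-1) (-1)
  rw [neg_one_mul, neg_neg, hdeg.deg_one, hg, ← WithBot.coe_add, ← WithBot.coe_zero,
    WithBot.coe_inj] at h
  have hg0 : g = 0 := two_nsmul_eq_zero.1 ((two_nsmul g).trans h.symm)
  rw [neg_eq_neg_one_mul, hdeg.deg_mul, hg, hg0, WithBot.coe_zero, zero_add]

theorem deg_nonneg (hdeg : IsDegreeFunction deg)
    (hwo : Set.IsWF {g : G | ∃ x : B, x ≠ 0 ∧ deg x = ↑g}) {x : B} (hx : x ≠ 0) :
    0 ≤ deg x := by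
  have := nontrivial_of_ne x 0 hx
  obtain ⟨g, hg⟩ := hdeg.exists_deg_eq_coe hx
  rw [hg, WithBot.coe_nonneg]
  by_contra! hneg
  have hdeg_pow (n : ℕ) : deg (x ^ (n + 1)) = ((n + 1) • g : G) := by
    rw [hdeg.deg_pow, hg, WithBot.coe_nsmul]
  refine Set.isWF_iff_no_descending_seq.1 hwo (fun n => (n + 1) • g) ?_ fun n =>
    ⟨x ^ (n + 1), hdeg.deg_eq_bot_iff.not.1 (by rw [hdeg_pow n]; exact WithBot.coe_ne_bot),
      hdeg_pow n⟩
  exact strictAnti_nat_of_succ_lt fun n => by simpa [succ_nsmul _ (n + 1)] using hneg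

theorem deg_eq_zero_of_isUnit [Nontrivial B] (hdeg : IsDegreeFunction deg)
    (hnonneg : ∀ x : B, x ≠ 0 → 0 ≤ deg x) {u : B} (hu : IsUnit u) : deg u = 0 := by
  obtain ⟨v, hv⟩ := hu.exists_right_inv
  have h := hdeg.deg_mul u v
  rw [hv, hdeg.deg_one] at h
  exact ((add_eq_zero_iff_of_nonneg (hnonneg u hu.ne_zero)
    (hnonneg v (right_ne_zero_of_mul_eq_one hv))).1 h.symm).1

theorem deg_aeval_le_zero [Nontrivial B] (hdeg : IsDegreeFunction deg) {A : Subalgebra R B}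
    (hA : ∀ a ∈ A, deg a ≤ 0) {c : B} (hc : deg c ≤ 0) (p : Polynomial A) :
    deg (Polynomial.aeval c p) ≤ 0 := by
  rw [Polynomial.aeval_eq_sum_range]
  refine hdeg.deg_sum_le _ _ fun i _ => ?_
  rw [Algebra.smul_def, hdeg.deg_mul, hdeg.deg_pow]
  exact add_nonpos (hA _ (p.coeff i).2) (nsmul_nonpos hc i)

theorem degDelta_le_iff (hdeg : IsDegreeFunction deg) (D : Derivation R B B) (a : B)
    {t : WithBot G} : degDelta deg D a ≤ t ↔ deg (D a) ≤ t + deg a := by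
  obtain rfl | ha := eq_or_ne a 0
  · simp [degDelta, hdeg.deg_zero]
  obtain ⟨g, hg⟩ := hdeg.exists_deg_eq_coe ha
  simp only [degDelta, hg, WithBot.unbotD_coe]
  cases deg (D a) <;> cases t <;> simp [← WithBot.coe_add]

def degApplyLeSubmonoid (hdeg : IsDegreeFunction deg) (D : Derivation R B B) (t : WithBot G) :
    Submonoid B where
  carrier := {a | deg (D a) ≤ t + deg a}
  one_mem' := by simp [hdeg.deg_zero]
  mul_mem' {a b} ha hb := by
    simp only [Set.mem_ofPred_eq, Derivation.leibniz, smul_eq_mul, hdeg.deg_mul] at ha hb ⊢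
    refine (hdeg.deg_add_le _ _).trans (max_le ?_ ?_) <;> rw [hdeg.deg_mul]
    · calc deg a + deg (D b) ≤ deg a + (t + deg b) := add_le_add_right hb _
        _ = t + (deg a + deg b) := by abel
    · calc deg b + deg (D a) ≤ deg b + (t + deg a) := add_le_add_right ha _
        _ = t + (deg a + deg b) := by abel

theorem deg_le_zero_and_deg_apply_le_of_mem_adjoin {k : Type*} [Field k] [Algebra k B]
    [Nontrivial B] (hdeg : IsDegreeFunction deg) (hnonneg : ∀ x : B, x ≠ 0 → 0 ≤ deg x)
    (D : Derivation k B B) {s : Set B} {t : WithBot G} (hs : ∀ w ∈ s, deg w ≤ 0 ∧ deg (D w) ≤ t)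
    {a : B} (ha : a ∈ Algebra.adjoin k s) : deg a ≤ 0 ∧ deg (D a) ≤ t := by
  induction ha using Algebra.adjoin_induction with
  | mem w hw => exact hs w hw
  | algebraMap r =>
    refine ⟨?_, by simp [hdeg.deg_zero]⟩
    obtain rfl | hr := eq_or_ne r 0
    · simp [hdeg.deg_zero]
    · exact (hdeg.deg_eq_zero_of_isUnit hnonneg ((isUnit_iff_ne_zero.2 hr).map _)).le
  | add u v _ _ hu hv =>
    rw [map_add]
    exact ⟨(hdeg.deg_add_le u v).trans (max_le hu.1 hv.1),
      (hdeg.deg_add_le _ _).trans (max_le hu.2 hv.2)⟩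
  | mul u v _ _ hu hv =>
    refine ⟨hdeg.deg_mul u v ▸ add_nonpos hu.1 hv.1, ?_⟩
    rw [Derivation.leibniz, smul_eq_mul, smul_eq_mul]
    refine (hdeg.deg_add_le _ _).trans (max_le ?_ ?_) <;> rw [hdeg.deg_mul, ← zero_add t]
    · exact add_le_add hu.1 hv.2
    · exact add_le_add hv.1 hu.2

theorem deg_apply_le_of_isAlgebraic [IsDomain B] [CharZero B] (hdeg : IsDegreeFunction deg)
    (hnonneg : ∀ x : B, x ≠ 0 → 0 ≤ deg x) (D : Derivation R B B) {A : Subalgebra R B}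
    {t : WithBot G} (hA : ∀ a ∈ A, deg a ≤ 0 ∧ deg (D a) ≤ t) {c : B} (hc : deg c ≤ 0)
    (halg : IsAlgebraic A c) : deg (D c) ≤ t := by
  obtain ⟨p, hpc, hp'c⟩ := Polynomial.exists_aeval_eq_zero_aeval_derivative_ne_zero halg
  have hD := D.apply_aeval_eq c p
  rw [hpc, map_zero, eq_comm, add_eq_zero_iff_neg_eq, smul_eq_mul] at hD
  have hE : deg (PolynomialModule.eval c
      (PolynomialModule.map B LinearMap.id ((D.compAlgebraMap A).mapCoeffs p))) ≤ t := by
    rw [PolynomialModule.eval_apply, Finsupp.sum]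
    refine hdeg.deg_sum_le _ _ fun i _ => ?_
    change deg (c ^ i * D (p.coeff i)) ≤ t
    rw [hdeg.deg_mul, hdeg.deg_pow, ← zero_add t]
    exact add_le_add (nsmul_nonpos hc i) (hA _ (p.coeff i).2).2
  have hp' : deg (Polynomial.aeval c (Polynomial.derivative p)) = 0 :=
    le_antisymm (hdeg.deg_aeval_le_zero (fun a ha => (hA a ha).1) hc _) (hnonneg _ hp'c)
  calc deg (D c) = deg (Polynomial.aeval c (Polynomial.derivative p) * D c) := by
        rw [hdeg.deg_mul, hp', zero_add]
    _ = _ := by rw [← hD, hdeg.deg_neg]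
    _ ≤ t := hE

theorem deg_le_and_deg_apply_le_of_mem_closure [Fintype ι] [Nontrivial B]
    (hdeg : IsDegreeFunction deg) (hnonneg : ∀ x : B, x ≠ 0 → 0 ≤ deg x) (x : ι → B)
    (D : Derivation R B B) {t : WithBot G} (hZ : ∀ c : B, deg c ≤ 0 → deg (D c) ≤ t)
    (hx : ∀ i, deg (D (x i)) ≤ t + deg (x i)) {g : WithBot G} {e : B}
    (he : e ∈ AddSubmonoid.closure (homogeneousMonomials deg x g)) :
    deg e ≤ g ∧ deg (D e) ≤ t + g := by
  induction he using AddSubmonoid.closure_induction with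
  | mem w hw =>
    obtain ⟨c, hc, v, rfl, hv⟩ := hw
    have hcD : c ∈ hdeg.degApplyLeSubmonoid D t := by
      change deg (D c) ≤ t + deg c
      obtain rfl | hc0 := eq_or_ne c 0
      · simp [hdeg.deg_zero]
      · rw [le_antisymm hc (hnonneg c hc0), add_zero]
        exact hZ c hc
    have hw : c * ∏ i, x i ^ v i ∈ hdeg.degApplyLeSubmonoid D t :=
      mul_mem hcD (prod_mem fun i _ => pow_mem (hx i) _)
    have hdeg_w : deg (c * ∏ i, x i ^ v i) ≤ g := by
      simp only [hdeg.deg_mul, hdeg.deg_prod, hdeg.deg_pow, ← hv]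
      exact add_le_of_nonpos_left hc
    exact ⟨hdeg_w, hw.trans (add_le_add_right hdeg_w t)⟩
  | zero => simp [hdeg.deg_zero]
  | add u v _ _ hu hv =>
    rw [map_add]
    exact ⟨(hdeg.deg_add_le u v).trans (max_le hu.1 hv.1),
      (hdeg.deg_add_le _ _).trans (max_le hu.2 hv.2)⟩

theorem deg_apply_le_add_deg [Fintype ι] [Nontrivial B] (hdeg : IsDegreeFunction deg)
    (hwo : Set.IsWF {g : G | ∃ x : B, x ≠ 0 ∧ deg x = ↑g}) (x : ι → B)
    (hgr : ∀ b : B, b ≠ 0 → ∃ e ∈ AddSubmonoid.closure (homogeneousMonomials deg x (deg b)),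
      deg (b - e) < deg b)
    (D : Derivation R B B) {t : WithBot G} (hZ : ∀ c : B, deg c ≤ 0 → deg (D c) ≤ t)
    (hx : ∀ i, deg (D (x i)) ≤ t + deg (x i)) (b : B) : deg (D b) ≤ t + deg b := by
  induction b using (hdeg.wellFounded_deg_lt hwo).induction with
  | _ b ih =>
    obtain rfl | hb := eq_or_ne b 0
    · simp [hdeg.deg_zero]
    obtain ⟨e, he, hlt⟩ := hgr b hb
    have hDe := (hdeg.deg_le_and_deg_apply_le_of_mem_closure (fun _ => hdeg.deg_nonneg hwo)
      x D hZ hx he).2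
    calc deg (D b) = deg (D (b - e) + D e) := by rw [← map_add, sub_add_cancel]
      _ ≤ t + deg b := (hdeg.deg_add_le _ _).trans
          (max_le ((ih _ hlt).trans (add_le_add_right hlt.le t)) hDe)

theorem isGreatest_degDeltaSet {k κ : Type*} [Field k] [CharZero k] [Algebra k B] [IsDomain B]
    [Fintype κ] [Fintype ι] (hdeg : IsDegreeFunction deg)
    (hwo : Set.IsWF {g : G | ∃ x : B, x ≠ 0 ∧ deg x = ↑g}) (z : κ → B) (hz : ∀ j, deg (z j) ≤ 0)
    (halg : ∀ b : B, deg b ≤ 0 → IsAlgebraic (Algebra.adjoin k (Set.range z)) b) (x : ι → B)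
    (hgr : ∀ b : B, b ≠ 0 → ∃ e ∈ AddSubmonoid.closure (homogeneousMonomials deg x (deg b)),
      deg (b - e) < deg b)
    (D : Derivation k B B) :
    IsGreatest (degDeltaSet deg D) ((Finset.univ.sup fun j => degDelta deg D (z j)) ⊔
      (Finset.univ.sup fun i => degDelta deg D (x i))) := by
  set M := (Finset.univ.sup fun j => degDelta deg D (z j)) ⊔
    (Finset.univ.sup fun i => degDelta deg D (x i))
  have : CharZero B := charZero_of_injective_algebraMap (algebraMap k B).injective
  have hnonneg (b : B) : b ≠ 0 → 0 ≤ deg b := hdeg.deg_nonneg hwo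
  have hzM (j : κ) : deg (z j) ≤ 0 ∧ deg (D (z j)) ≤ M := by
    refine ⟨hz j, ((hdeg.degDelta_le_iff D (z j)).1 ?_).trans (add_le_of_nonpos_right (hz j))⟩
    exact le_sup_of_le_left (Finset.le_sup (f := fun j => degDelta deg D (z j)) (Finset.mem_univ j))
  have hZ (c : B) (hc : deg c ≤ 0) : deg (D c) ≤ M :=
    hdeg.deg_apply_le_of_isAlgebraic hnonneg D
      (fun a ha => hdeg.deg_le_zero_and_deg_apply_le_of_mem_adjoin hnonneg D
        (by rintro _ ⟨j, rfl⟩; exact hzM j) ha) hc (halg c hc)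
  have hxM (i : ι) : deg (D (x i)) ≤ M + deg (x i) := (hdeg.degDelta_le_iff D (x i)).1
    (le_sup_of_le_right (Finset.le_sup (f := fun i => degDelta deg D (x i)) (Finset.mem_univ i)))
  refine ⟨LinearOrder.supClosed _ (hdeg.finsetSup_degDelta_mem_degDeltaSet D _ z)
    (hdeg.finsetSup_degDelta_mem_degDeltaSet D _ x), ?_⟩
  rintro _ ⟨a, -, rfl⟩
  exact (hdeg.degDelta_le_iff D a).2 (hdeg.deg_apply_le_add_deg hwo x hgr D hZ hxM a)

end IsDegreeFunction

theorem stmt18_general {k B G : Type*} [Field k] [CharZero k] [CommRing B] [IsDomain B]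
    [Algebra k B] [AddCommGroup G] [LinearOrder G] [IsOrderedAddMonoid G]
    (deg : B → WithBot G) (hdegfn : IsDegreeFunction deg)
    -- the set of values of deg on B \ {0} is well-ordered
    (hwo : Set.IsWF {g : G | ∃ x : B, x ≠ 0 ∧ deg x = ↑g})
    -- z₁,…,z_m ∈ Z = {x | deg x ≤ 0} with Z algebraic over k[z₁,…,z_m]
    (m : ℕ) (z : Fin m → B) (hz : ∀ j, deg (z j) ≤ 0)
    (halg : ∀ b : B, deg b ≤ 0 →
      IsAlgebraic (↥(Algebra.adjoin k (Set.range z))) b)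
    (n : ℕ) (x : Fin n → B)
    -- Gr(B) = Z[gr(x₁),…,gr(xₙ)]:
    (hgr : ∀ b : B, b ≠ 0 → ∃ e ∈ AddSubmonoid.closure
        {w : B | ∃ c : B, deg c ≤ 0 ∧ ∃ v : Fin n → ℕ,
          w = c * ∏ i : Fin n, x i ^ v i ∧
          (∑ i : Fin n, v i • deg (x i)) = deg b},
      deg (b - e) < deg b) :
    -- deg takes values in nonnegative degrees
    (∀ b : B, b ≠ 0 → 0 ≤ deg b) ∧
    -- B = Z[x₁,…,xₙ]
    Subring.closure ({b : B | deg b ≤ 0} ∪ Set.range x) = ⊤ ∧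
    -- deg is tame over k, with deg(D) = max {δ_D(zⱼ), δ_D(xᵢ)}
    (∀ D : Derivation k B B, DegreeDefinedAt deg ⇑D) ∧
    (∀ D : Derivation k B B,
      IsGreatest (degDeltaSet deg ⇑D)
        ((Finset.univ.sup fun j => degDelta deg ⇑D (z j)) ⊔
          (Finset.univ.sup fun i => degDelta deg ⇑D (x i)))) := by
  have hgreatest := hdegfn.isGreatest_degDeltaSet hwo z hz halg x hgr
  exact ⟨fun b => hdegfn.deg_nonneg hwo, hdegfn.subring_closure_union_range_eq_top hwo x hgr,
    fun D => ⟨_, hgreatest D⟩, hgreatest⟩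

theorem stmt18 {k B G : Type*} [Field k] [CharZero k] [CommRing B] [IsDomain B]
    [Algebra k B] [AddCommGroup G] [LinearOrder G] [IsOrderedAddMonoid G]
    -- B has finite transcendence degree over k
    (htrdeg : ∃ (N : ℕ) (w : Fin N → B), ∀ b : B,
      IsAlgebraic (↥(Algebra.adjoin k (Set.range w))) b)
    (deg : B → WithBot G) (hdegfn : IsDegreeFunction deg)
    -- the set of values of deg on B \ {0} is well-ordered
    (hwo : Set.IsWF {g : G | ∃ x : B, x ≠ 0 ∧ deg x = ↑g})
    -- z₁,…,z_m ∈ Z = {x | deg x ≤ 0} with Z algebraic over k[z₁,…,z_m]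
    (m : ℕ) (z : Fin m → B) (hz : ∀ j, deg (z j) ≤ 0)
    (halg : ∀ b : B, deg b ≤ 0 →
      IsAlgebraic (↥(Algebra.adjoin k (Set.range z))) b)
    (n : ℕ) (x : Fin n → B) (hx0 : ∀ i, x i ≠ 0)
    -- Gr(B) = Z[gr(x₁),…,gr(xₙ)]:
    (hgr : ∀ b : B, b ≠ 0 → ∃ e ∈ AddSubmonoid.closure
        {w : B | ∃ c : B, deg c ≤ 0 ∧ ∃ v : Fin n → ℕ,
          w = c * ∏ i : Fin n, x i ^ v i ∧
          (∑ i : Fin n, v i • deg (x i)) = deg b},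
      deg (b - e) < deg b) :
    -- deg takes values in nonnegative degrees
    (∀ b : B, b ≠ 0 → 0 ≤ deg b) ∧
    -- B = Z[x₁,…,xₙ]
    Subring.closure ({b : B | deg b ≤ 0} ∪ Set.range x) = ⊤ ∧
    -- deg is tame over k, with deg(D) = max {δ_D(zⱼ), δ_D(xᵢ)}
    (∀ D : Derivation k B B, DegreeDefinedAt deg ⇑D) ∧
    (∀ D : Derivation k B B,
      IsGreatest (degDeltaSet deg ⇑D)
        ((Finset.univ.sup fun j => degDelta deg ⇑D (z j)) ⊔
          (Finset.univ.sup fun i => degDelta deg ⇑D (x i)))) :=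
  stmt18_general deg hdegfn hwo m z hz halg n x hgr
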